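/- arXiv:1412.7617 — 2 statements merged into one kernel-verified Lean document; each statement's English description precedes it below -/
import Mathlib

section
/- Let n_1,…,n_{I+1} and m_1,…,m_I be positive integers, v_i := \sum_{j=1}^{i}(n_j + m_j), w_i := 1 + n_i + v_{i-1} (with v_0 = 0). Then \sum_{i=1}^{I} q^{-1 - \sum_{j=1}^{i} n_j}·[m_i]/([w_i]·[w_{i+1}]) · \prod_{j=i+2}^{I+1} [1 + v_{j-1}]/[w_j] = \prod_{i=1}^{I+1} [1 + v_{i-1}]/[w_i] - q^{\sum_{i=1}^{I} m_i}/[w_{I+1}], where [n] is the quantum integer and indices follow the convention v_i = \sum_{j≤i}(n_j+m_j). -/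
/-!
Both sides vanish at `I = 0` (as `[1] = 1`) and satisfy the same recursion in `I`: going from
`I` to `I + 1` multiplies them by `[1 + v_{I+1}] / [w_{I+2}]` and adds the new summand. For the
right-hand side this amounts to the new summand being
`q^{M_I} [1 + v_{I+1}] / ([w_{I+1}] [w_{I+2}]) - q^{M_{I+1}} / [w_{I+2}]`, where
`M_I = ∑_{i ≤ I} m_i`. Since `1 + v_{I+1} = w_{I+1} + m_{I+1}` and
`-1 - ∑_{j ≤ I+1} n_j = M_I - w_{I+1}`, this is the identity
`q^{M-a} [m] = q^M [a+m] - q^{M+m} [a]` for `a = w_{I+1}`.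
-/

open Finset

/-- The quantum integer `[n] = (q^n - q^(-n))/(q - q⁻¹)`. -/
noncomputable def qint {K : Type*} [Field K] (q : K) (n : ℤ) : K :=
  (q ^ n - q ^ (-n)) / (q - q⁻¹)

theorem sum_mul_prod_Icc_eq_prod_sub {R : Type*} [CommRing R] (r t e : ℕ → R)
    (h_zero : e 0 = r 1) (h_succ : ∀ i, t (i + 1) = e i * r (i + 2) - e (i + 1)) (I : ℕ) :
    ∑ i ∈ Icc 1 I, t i * ∏ j ∈ Icc (i + 2) (I + 1), r j = ∏ i ∈ Icc 1 (I + 1), r i - e I := by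
  induction I with
  | zero => simp [h_zero]
  | succ I ih =>
    have h_tail : ∀ i ∈ Icc 1 I, t i * ∏ j ∈ Icc (i + 2) (I + 2), r j
        = (t i * ∏ j ∈ Icc (i + 2) (I + 1), r j) * r (I + 2) := fun i hi => by
      rw [prod_Icc_succ_top (by grind), mul_assoc]
    have h_last : ∏ j ∈ Icc (I + 1 + 2) (I + 1 + 1), r j = 1 := by
      rw [Icc_eq_empty (by omega), prod_empty]
    rw [sum_Icc_succ_top (by omega), sum_congr rfl h_tail, ← sum_mul, ih, h_last,
      prod_Icc_succ_top (by omega : 1 ≤ I + 2), h_succ]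
    ring

section QuantumInteger

variable {K : Type*} [Field K] {q : K}

theorem qint_one (hq : q ≠ 0) (hq2 : q ^ 2 ≠ 1) : qint q 1 = 1 := by
  have h : q - q⁻¹ ≠ 0 := by
    rw [sub_ne_zero]
    rintro h
    apply hq2
    rw [sq]
    nth_rewrite 2 [h]
    exact mul_inv_cancel₀ hq
  simpa [qint] using div_self h

theorem zpow_sub_mul_qint (hq : q ≠ 0) (M a m : ℤ) :
    q ^ (M - a) * qint q m = q ^ M * qint q (a + m) - q ^ (M + m) * qint q a := by
  simp only [qint, zpow_sub₀ hq, zpow_add₀ hq, zpow_neg]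
  field_simp
  ring

theorem zpow_sub_mul_qint_div_eq (hq : q ≠ 0) {a b : ℤ} (ha : qint q a ≠ 0) (hb : qint q b ≠ 0)
    (M m : ℤ) :
    q ^ (M - a) * qint q m / (qint q a * qint q b)
      = q ^ M / qint q a * (qint q (a + m) / qint q b) - q ^ (M + m) / qint q b := by
  rw [zpow_sub_mul_qint hq]
  field_simp

end QuantumInteger

theorem sum_rule_app11_general {K : Type*} [Field K] (q : K)
    (hq : q ≠ 0) (hq2 : q ^ 2 ≠ 1)
    (hpos : ∀ n : ℤ, 1 ≤ n → qint q n ≠ 0)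
    (I : ℕ) (m n : ℕ → ℕ)
    (v w : ℕ → ℤ)
    (hv : ∀ i, v i = ∑ j ∈ Icc 1 i, ((n j : ℤ) + (m j : ℤ)))
    (hw : ∀ i, w i = 1 + (n i : ℤ) + v (i - 1)) :
    ∑ i ∈ Icc 1 I,
      q ^ (-1 - ∑ j ∈ Icc 1 i, (n j : ℤ)) * qint q (m i) /
          (qint q (w i) * qint q (w (i + 1))) *
        ∏ j ∈ Icc (i + 2) (I + 1), qint q (1 + v (j - 1)) / qint q (w j)
      = (∏ i ∈ Icc 1 (I + 1), qint q (1 + v (i - 1)) / qint q (w i)) -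
          q ^ (∑ i ∈ Icc 1 I, (m i : ℤ)) / qint q (w (I + 1)) := by
  have hw_ne : ∀ k, qint q (w k) ≠ 0 := fun k => hpos _ <| by
    have : 0 ≤ v (k - 1) := hv _ ▸ sum_nonneg fun j _ => by positivity
    rw [hw]
    omega
  refine sum_mul_prod_Icc_eq_prod_sub (fun j => qint q (1 + v (j - 1)) / qint q (w j))
    (fun i => q ^ (-1 - ∑ j ∈ Icc 1 i, (n j : ℤ)) * qint q (m i) /
      (qint q (w i) * qint q (w (i + 1))))
    (fun i => q ^ (∑ j ∈ Icc 1 i, (m j : ℤ)) / qint q (w (i + 1))) ?_ (fun i => ?_) I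
  · simp [hv, qint_one hq hq2]
  · have hv_succ : 1 + v (i + 1) = w (i + 1) + m (i + 1) := by
      rw [hw, hv, hv, sum_Icc_succ_top (by omega)]
      simp only [add_tsub_cancel_right]
      ring
    have hexp : -1 - ∑ j ∈ Icc 1 (i + 1), (n j : ℤ) = ∑ j ∈ Icc 1 i, (m j : ℤ) - w (i + 1) := by
      rw [hw, hv, sum_Icc_succ_top (by omega), sum_add_distrib]
      simp only [add_tsub_cancel_right]
      ring
    rw [hexp, show i + 2 - 1 = i + 1 from rfl, hv_succ,
      sum_Icc_succ_top (by omega : 1 ≤ i + 1) fun j => (m j : ℤ)]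
    exact zpow_sub_mul_qint_div_eq hq (hw_ne _) (hw_ne _) _ _

/-- Lemma (lemma-app-eNA4, Eqn. (app-11)): with `v_i = ∑_{j≤i}(n_j+m_j)` and
`w_i = 1 + n_i + v_{i-1}`,
`∑_{i=1}^I q^{-1-∑_{j≤i}n_j}[m_i]/([w_i][w_{i+1}]) ∏_{j=i+2}^{I+1}[1+v_{j-1}]/[w_j]
  = ∏_{i=1}^{I+1}[1+v_{i-1}]/[w_i] - q^{∑ m_i}/[w_{I+1}]`. -/
theorem sum_rule_app11 {K : Type*} [Field K] (q : K)
    (hq : q ≠ 0) (hq2 : q ^ 2 ≠ 1)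
    (hpos : ∀ n : ℤ, 1 ≤ n → qint q n ≠ 0)
    (I : ℕ) (m n : ℕ → ℕ)
    (hm : ∀ i ∈ Icc 1 I, 1 ≤ m i) (hn : ∀ i ∈ Icc 1 (I + 1), 1 ≤ n i)
    (v w : ℕ → ℤ)
    (hv : ∀ i, v i = ∑ j ∈ Icc 1 i, ((n j : ℤ) + (m j : ℤ)))
    (hw : ∀ i, w i = 1 + (n i : ℤ) + v (i - 1)) :
    ∑ i ∈ Icc 1 I,
      q ^ (-1 - ∑ j ∈ Icc 1 i, (n j : ℤ)) * qint q (m i) /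
          (qint q (w i) * qint q (w (i + 1))) *
        ∏ j ∈ Icc (i + 2) (I + 1), qint q (1 + v (j - 1)) / qint q (w j)
      = (∏ i ∈ Icc 1 (I + 1), qint q (1 + v (i - 1)) / qint q (w i)) -
          q ^ (∑ i ∈ Icc 1 I, (m i : ℤ)) / qint q (w (I + 1)) :=
  sum_rule_app11_general q hq hq2 hpos I m n v w hv hw
end

section
/- Let n_1,…,n_I and m_1,…,m_I be positive integers and v_i := \sum_{j=1}^{i}(n_j + m_j) with v_0 = 0. Then \sum_{i=1}^{I} q^{-\sum_{j=1}^{i} n_j}·[m_i]/[1 + n_i + v_{i-1}] · \prod_{j=i+1}^{I} [1 + v_j]/[1 + n_j + v_{j-1}] = q·\prod_{j=1}^{I} [1 + v_j]/[1 + n_j + v_{j-1}] - q^{1 + \sum_{i=1}^{I} m_i}, where [n] is the quantum integer. -/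
/-!
With `c i = q ^ (1 + m₁ + ⋯ + mᵢ)` and `rᵢ = [1 + vᵢ] / [1 + nᵢ + vᵢ₋₁]` the `i`-th factor of the
product, the coefficient `q^(-n₁-⋯-nᵢ) [mᵢ] / [1 + nᵢ + vᵢ₋₁]` of the `i`-th summand equals
`cᵢ₋₁ rᵢ - cᵢ`: this is the addition rule
`[y + m] = q^m [y] + q^(-y) [m]` for `y = 1 + nᵢ + vᵢ₋₁`, `m = mᵢ`. The sum of
`(cᵢ₋₁ rᵢ - cᵢ) rᵢ₊₁ ⋯ r_I` telescopes to `c₀ r₁ ⋯ r_I - c_I`.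
-/

open Finset

theorem qint_add {K : Type*} [Field K] {q : K} (hq : q ≠ 0) (a b : ℤ) :
    qint q (a + b) = q ^ b * qint q a + q ^ (-a) * qint q b := by
  simp only [qint, mul_div_assoc', ← add_div, mul_sub, ← zpow_add₀ hq]
  ring_nf

theorem Finset.sum_mul_prod_Icc_eq_of_telescoping {R : Type*} [CommRing R] (t r c : ℕ → R)
    (I : ℕ) (h : ∀ i < I, t (i + 1) = c i * r (i + 1) - c (i + 1)) :
    ∑ i ∈ Icc 1 I, t i * ∏ j ∈ Icc (i + 1) I, r j = c 0 * ∏ j ∈ Icc 1 I, r j - c I := by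
  induction I with
  | zero => simp
  | succ I ih =>
    have hI : 1 ≤ I + 1 := by omega
    have hsplit : ∀ i ∈ Icc 1 I,
        t i * ∏ j ∈ Icc (i + 1) (I + 1), r j = (t i * ∏ j ∈ Icc (i + 1) I, r j) * r (I + 1) :=
      fun i hi => by
        rw [prod_Icc_succ_top (by simp at hi; omega), mul_assoc]
    rw [sum_Icc_succ_top hI, sum_congr rfl hsplit, ← sum_mul,
      ih fun i hi => h i (by omega), h I (by omega), prod_Icc_succ_top hI,
      Icc_eq_empty_of_lt (Nat.lt_succ_self (I + 1)), prod_empty]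
    ring

theorem sum_rule_app16_general {K : Type*} [Field K] (q : K)
    (hq : q ≠ 0)
    (hpos : ∀ n : ℤ, 1 ≤ n → qint q n ≠ 0)
    (I : ℕ) (m n : ℕ → ℕ)
    (v : ℕ → ℤ) (hv : ∀ i, v i = ∑ j ∈ Icc 1 i, ((n j : ℤ) + (m j : ℤ))) :
    ∑ i ∈ Icc 1 I,
      q ^ (-∑ j ∈ Icc 1 i, (n j : ℤ)) * qint q (m i) /
          qint q (1 + (n i : ℤ) + v (i - 1)) *
        ∏ j ∈ Icc (i + 1) I, qint q (1 + v j) / qint q (1 + (n j : ℤ) + v (j - 1))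
      = q * (∏ j ∈ Icc 1 I, qint q (1 + v j) / qint q (1 + (n j : ℤ) + v (j - 1))) -
          q ^ (1 + ∑ i ∈ Icc 1 I, (m i : ℤ)) := by
  set c : ℕ → K := fun i => q ^ (1 + ∑ j ∈ Icc 1 i, (m j : ℤ))
  refine (sum_mul_prod_Icc_eq_of_telescoping _ _ c I fun i _ => ?_).trans (by simp [c])
  set y : ℤ := 1 + n (i + 1) + v i with hy_def
  have hvi : v i = ∑ j ∈ Icc 1 i, (n j : ℤ) + ∑ j ∈ Icc 1 i, (m j : ℤ) := by
    rw [hv, sum_add_distrib]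
  have hy : qint q y ≠ 0 := by
    refine hpos y ?_
    have : 0 ≤ v i := hv i ▸ sum_nonneg fun j _ => by positivity
    omega
  have hvy : 1 + v (i + 1) = y + m (i + 1) := by
    rw [hv, sum_Icc_succ_top (by omega), ← hv]; ring
  have ht : q ^ (-∑ j ∈ Icc 1 (i + 1), (n j : ℤ)) = c i * q ^ (-y) := by
    simp only [c, ← zpow_add₀ hq]
    rw [sum_Icc_succ_top (by omega), hy_def, hvi]
    ring_nf
  have hc' : c (i + 1) = c i * q ^ (m (i + 1) : ℤ) := by
    simp only [c, ← zpow_add₀ hq]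
    rw [sum_Icc_succ_top (by omega)]
    ring_nf
  rw [Nat.add_sub_cancel, ← hy_def, hvy, qint_add hq y, ht, hc']
  field_simp
  ring

/-- Lemma (lemma-app-16): with `v_i = ∑_{j≤i}(n_j+m_j)`, `v_0 = 0`,
`∑_{i=1}^I q^{-∑_{j≤i}n_j}[m_i]/[1+n_i+v_{i-1}] ∏_{j=i+1}^I [1+v_j]/[1+n_j+v_{j-1}]
  = q ∏_{j=1}^I [1+v_j]/[1+n_j+v_{j-1}] - q^{1+∑ m_i}`. -/
theorem sum_rule_app16 {K : Type*} [Field K] (q : K)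
    (hq : q ≠ 0) (hq2 : q ^ 2 ≠ 1)
    (hpos : ∀ n : ℤ, 1 ≤ n → qint q n ≠ 0)
    (I : ℕ) (m n : ℕ → ℕ)
    (hm : ∀ i ∈ Icc 1 I, 1 ≤ m i) (hn : ∀ i ∈ Icc 1 I, 1 ≤ n i)
    (v : ℕ → ℤ) (hv : ∀ i, v i = ∑ j ∈ Icc 1 i, ((n j : ℤ) + (m j : ℤ))) :
    ∑ i ∈ Icc 1 I,
      q ^ (-∑ j ∈ Icc 1 i, (n j : ℤ)) * qint q (m i) /
          qint q (1 + (n i : ℤ) + v (i - 1)) *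
        ∏ j ∈ Icc (i + 1) I, qint q (1 + v j) / qint q (1 + (n j : ℤ) + v (j - 1))
      = q * (∏ j ∈ Icc 1 I, qint q (1 + v j) / qint q (1 + (n j : ℤ) + v (j - 1))) -
          q ^ (1 + ∑ i ∈ Icc 1 I, (m i : ℤ)) :=
  sum_rule_app16_general q hq hpos I m n v hv
end
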